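/- Under Rayleigh fading (|h|² exponential with mean 1) with ρ = P_x/P_w ≥ 1 and κ = max{P_x/P_w, P_s/P_w, 1}, the capacity gap satisfies log₂((1/ρ + 1) · E[1/(|h|² + 1/(P_x/P_w + P_s/P_w))]) < 1.48 + log₂(log₂(1 + κ)). -/

import Mathlib

open MeasureTheory Real Set

/-! With `a = 1 / (ρ + σ)` the expectation is `∫₀^∞ e^{-x} / (x + a) dx`. Dominating the integrand
by `e^{-x} / (1 + a)` everywhere plus `1 / (x + a) - 1 / (1 + a)` on `(0, 1]` bounds it by
`log (1 + 1 / a) = log (1 + ρ + σ) ≤ log (1 + 2κ)`. With `1 / ρ + 1 ≤ 2` and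
`log (1 + 2κ) ≤ 2 log (1 + κ)`, the left side is at most `2 + log₂ (log 2) + log₂ (log₂ (1 + κ))`,
and `log₂ (log 2) < -0.52`. -/

section ExpIntegral

variable {a : ℝ}

theorem integrableOn_one_div_add_mul_exp_neg (ha : 0 < a) :
    IntegrableOn (fun x : ℝ => 1 / (x + a) * exp (-x)) (Ioi 0) := by
  have hdom : IntegrableOn (fun x : ℝ => a⁻¹ * exp (-x)) (Ioi 0) := by
    simpa [IntegrableOn] using (exp_neg_integrableOn_Ioi 0 one_pos).const_mul a⁻¹
  have hcont : ContinuousOn (fun x : ℝ => 1 / (x + a) * exp (-x)) (Ioi 0) :=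
    fun x hx => by have : (0 : ℝ) < x := hx; fun_prop (disch := positivity)
  refine hdom.mono' (hcont.aestronglyMeasurable measurableSet_Ioi) ?_
  filter_upwards [ae_restrict_mem measurableSet_Ioi] with x (hx : 0 < x)
  rw [norm_of_nonneg (by positivity)]
  gcongr
  rw [one_div]
  gcongr
  linarith

theorem setIntegral_one_div_add_mul_exp_neg_pos (ha : 0 < a) :
    0 < ∫ x in Ioi 0, 1 / (x + a) * exp (-x) := by
  have hpos : ∀ x ∈ Ioi (0 : ℝ), 0 < 1 / (x + a) * exp (-x) := fun x (hx : 0 < x) => by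
    positivity
  rw [setIntegral_pos_iff_support_of_nonneg_ae
    ((ae_restrict_mem measurableSet_Ioi).mono fun x hx => (hpos x hx).le)
    (integrableOn_one_div_add_mul_exp_neg ha)]
  calc (0 : ENNReal) < volume (Ioi (0 : ℝ)) := by simp
    _ ≤ _ := measure_mono (by intro x hx; exact ⟨(hpos x hx).ne', hx⟩)

theorem one_div_add_mul_exp_neg_le {x : ℝ} (ha : 0 < a) (hx : 0 < x) :
    1 / (x + a) * exp (-x) ≤
      exp (-x) / (1 + a) + (Ioc 0 1).indicator (fun x => 1 / (x + a) - 1 / (1 + a)) x := by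
  by_cases hx1 : x ≤ 1
  · rw [indicator_of_mem (show x ∈ Ioc 0 1 from ⟨hx, hx1⟩)]
    have hexp : exp (-x) ≤ 1 := exp_le_one_iff.mpr (by linarith)
    have hfrac : 1 / (1 + a) ≤ 1 / (x + a) := by gcongr
    linear_combination mul_nonneg (sub_nonneg.2 hexp) (sub_nonneg.2 hfrac)
  · rw [indicator_of_notMem fun h => hx1 h.2, add_zero]
    calc 1 / (x + a) * exp (-x) ≤ 1 / (1 + a) * exp (-x) := by gcongr; linarith
      _ = exp (-x) / (1 + a) := by ring

theorem integral_one_div_add_sub_one_div (ha : 0 < a) :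
    ∫ x in (0 : ℝ)..1, (1 / (x + a) - 1 / (1 + a)) = log (1 + 1 / a) - 1 / (1 + a) := by
  have hint : IntervalIntegrable (fun x : ℝ => 1 / (x + a)) volume 0 1 := by
    refine ContinuousOn.intervalIntegrable fun x hx => ?_
    have : 0 ≤ x := by simpa using hx.1
    fun_prop (disch := positivity)
  rw [intervalIntegral.integral_sub hint intervalIntegrable_const,
    intervalIntegral.integral_comp_add_right (fun x => 1 / x), zero_add,
    integral_one_div_of_pos ha (by linarith), intervalIntegral.integral_const,
    show (1 + a) / a = 1 + 1 / a by rw [add_div, div_self ha.ne', add_comm]]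
  ring

theorem setIntegral_one_div_add_mul_exp_neg_le (ha : 0 < a) :
    ∫ x in Ioi 0, 1 / (x + a) * exp (-x) ≤ log (1 + 1 / a) := by
  set h : ℝ → ℝ := fun x => 1 / (x + a) - 1 / (1 + a)
  have hexp : IntegrableOn (fun x : ℝ => exp (-x) / (1 + a)) (Ioi 0) := by
    simpa [IntegrableOn] using (exp_neg_integrableOn_Ioi 0 one_pos).div_const (1 + a)
  have hh : IntegrableOn ((Ioc 0 1).indicator h) (Ioi 0) := by
    refine (integrable_indicator_iff measurableSet_Ioc).mpr ?_ |>.integrableOn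
    refine ContinuousOn.integrableOn_Icc (fun x hx => ?_) |>.mono_set Ioc_subset_Icc_self
    have : 0 ≤ x := hx.1
    fun_prop (disch := positivity)
  calc ∫ x in Ioi 0, 1 / (x + a) * exp (-x)
      ≤ ∫ x in Ioi 0, (exp (-x) / (1 + a) + (Ioc 0 1).indicator h x) :=
        setIntegral_mono_on (integrableOn_one_div_add_mul_exp_neg ha) (hexp.add hh)
          measurableSet_Ioi fun x hx => one_div_add_mul_exp_neg_le ha hx
    _ = 1 / (1 + a) + ∫ x in (0 : ℝ)..1, h x := by
        rw [integral_add hexp hh, integral_div, integral_exp_neg_Ioi_zero,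
          setIntegral_indicator measurableSet_Ioc, inter_eq_right.mpr Ioc_subset_Ioi_self,
          intervalIntegral.integral_of_le zero_le_one]
    _ = log (1 + 1 / a) := by
        rw [integral_one_div_add_sub_one_div ha]
        ring

end ExpIntegral

theorem log_one_add_two_mul_le {κ : ℝ} (hκ : 0 ≤ κ) : log (1 + 2 * κ) ≤ 2 * log (1 + κ) := by
  have hsq := log_pow (1 + κ) 2
  push_cast at hsq
  rw [← hsq]
  exact log_le_log (by linarith) (by nlinarith)

theorem logb_two_log_two_lt : logb 2 (log 2) < -13 / 25 := by
  have hl2 : 0 < log 2 := log_pos one_lt_two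
  have hpow : log 2 ^ 25 < 2 ^ (-13 : ℤ) :=
    calc log 2 ^ 25 ≤ 0.6931471808 ^ 25 := by gcongr; exact log_two_lt_d9.le
      _ < 2 ^ (-13 : ℤ) := by norm_num
  have := log_lt_log (by positivity) hpow
  rw [log_pow, log_zpow] at this
  rw [logb, div_lt_iff₀ hl2]
  push_cast at this
  linarith

theorem logb_two_mul_log_one_add_two_mul_lt {κ : ℝ} (hκ : 0 < κ) :
    logb 2 (2 * log (1 + 2 * κ)) < 1.48 + logb 2 (logb 2 (1 + κ)) := by
  have hl2 : 0 < log 2 := log_pos one_lt_two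
  calc logb 2 (2 * log (1 + 2 * κ)) ≤ logb 2 (2 ^ 2 * (logb 2 (1 + κ) * log 2)) := by
        refine logb_le_logb_of_le one_lt_two (mul_pos two_pos (log_pos (by linarith))) ?_
        rw [logb, div_mul_cancel₀ _ hl2.ne']
        linarith [log_one_add_two_mul_le hκ.le]
    _ = 2 + logb 2 (logb 2 (1 + κ)) + logb 2 (log 2) := by
        rw [logb_mul (by positivity) (mul_pos (logb_pos one_lt_two (by linarith)) hl2).ne',
          logb_mul (logb_pos one_lt_two (by linarith)).ne' hl2.ne', logb_pow,
          logb_self_eq_one one_lt_two]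
        push_cast
        ring
    _ < 1.48 + logb 2 (logb 2 (1 + κ)) := by linarith [logb_two_log_two_lt]

theorem rayleigh_gap_bound_general (Px Ps Pw : ℝ)
    (hPs : 0 < Ps) (hPw : 0 < Pw)
    (hρ : 1 ≤ Px / Pw) :
    Real.logb 2 ((1 / (Px / Pw) + 1) *
        ∫ x in Set.Ioi (0 : ℝ),
          (1 / (x + 1 / (Px / Pw + Ps / Pw))) * Real.exp (-x))
      < 1.48 + Real.logb 2 (Real.logb 2 (1 + max (max (Px / Pw) (Ps / Pw)) 1)) := by
  set ρ := Px / Pw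
  set σ := Ps / Pw
  set κ := max (max ρ σ) 1
  have hσ : 0 < σ := div_pos hPs hPw
  have hsκ : ρ + σ ≤ 2 * κ := by
    have := le_max_left (max ρ σ) 1
    linarith [le_max_left ρ σ, le_max_right ρ σ]
  have ha : 0 < 1 / (ρ + σ) := by positivity
  have hI_le := setIntegral_one_div_add_mul_exp_neg_le ha
  rw [one_div_one_div] at hI_le
  have hρ_le : 1 / ρ + 1 ≤ 2 := by linarith [div_le_one_of_le₀ hρ (by linarith)]
  calc logb 2 ((1 / ρ + 1) * ∫ x in Ioi 0, 1 / (x + 1 / (ρ + σ)) * exp (-x))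
      ≤ logb 2 (2 * log (1 + 2 * κ)) := by
        refine logb_le_logb_of_le one_lt_two
          (mul_pos (by positivity) (setIntegral_one_div_add_mul_exp_neg_pos ha)) ?_
        exact mul_le_mul hρ_le (hI_le.trans (log_le_log (by linarith) (by linarith)))
          (setIntegral_one_div_add_mul_exp_neg_pos ha).le zero_le_two
    _ < 1.48 + logb 2 (logb 2 (1 + κ)) :=
        logb_two_mul_log_one_add_two_mul_lt (by linarith [le_max_right (max ρ σ) 1])

/-- Rayleigh-fading gap bound: with `|h|²` exponential of mean 1,
`ρ = Pₓ/P_w ≥ 1` and `κ = max{Pₓ/P_w, Pₛ/P_w, 1}`, the capacity gap satisfies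
`log₂((1/ρ + 1)·E[1/(|h|² + 1/(Pₓ/P_w + Pₛ/P_w))]) < 1.48 + log₂(log₂(1 + κ))`. -/
theorem rayleigh_gap_bound (Px Ps Pw : ℝ)
    (hPx : 0 < Px) (hPs : 0 < Ps) (hPw : 0 < Pw)
    (hρ : 1 ≤ Px / Pw) :
    Real.logb 2 ((1 / (Px / Pw) + 1) *
        ∫ x in Set.Ioi (0 : ℝ),
          (1 / (x + 1 / (Px / Pw + Ps / Pw))) * Real.exp (-x))
      < 1.48 + Real.logb 2 (Real.logb 2 (1 + max (max (Px / Pw) (Ps / Pw)) 1)) :=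
  rayleigh_gap_bound_general Px Ps Pw hPs hPw hρ
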